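/- arXiv:2409.17756 — 4 statements merged into one kernel-verified Lean document; each statement's English description precedes it below -/
import Mathlib

section
/- Under the dynamics T_i = σ + (1-σ)L_{i-1} and L_i = (1-γ-φ)T_i/(1-γ-φT_i), a point with T ∈ (0,1) is a fixed point if and only if φ = σ(1-γ)/T. Additionally, T = L = 1 is always a fixed point. -/
/-!
Clearing the denominator `1 - γ - φ T`, which is positive for `T ≤ 1`, the fixed-point defect of
the dynamics factors as `(1 - T) (σ (1 - γ) - φ T)`. The first factor gives the fixed point `T = 1`;
on `(0, 1)` only the second can vanish, i.e. `φ T = σ (1 - γ)`.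
-/

open Function

noncomputable def reservesRatio (γ φ T : ℝ) : ℝ := (1 - γ - φ) * T / (1 - γ - φ * T)

def volumeRatio (σ L : ℝ) : ℝ := σ + (1 - σ) * L

noncomputable def leaderStep (σ γ φ : ℝ) (T : ℝ) : ℝ := volumeRatio σ (reservesRatio γ φ T)

section

variable {σ γ φ T : ℝ}

theorem one_sub_sub_mul_pos (hφ₀ : 0 ≤ φ) (hφ : φ < 1 - γ) (hT : T ≤ 1) :
    0 < 1 - γ - φ * T := by
  nlinarith

theorem leaderStep_sub_self (hD : 1 - γ - φ * T ≠ 0) :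
    leaderStep σ γ φ T - T = (1 - T) * (σ * (1 - γ) - φ * T) / (1 - γ - φ * T) := by
  unfold leaderStep volumeRatio reservesRatio
  field_simp
  ring

theorem isFixedPt_leaderStep_iff (hD : 1 - γ - φ * T ≠ 0) :
    IsFixedPt (leaderStep σ γ φ) T ↔ (1 - T) * (σ * (1 - γ) - φ * T) = 0 := by
  rw [IsFixedPt, ← sub_eq_zero, leaderStep_sub_self hD, div_eq_zero_iff, or_iff_left hD]

theorem isFixedPt_leaderStep_one (hD : 1 - γ - φ ≠ 0) : IsFixedPt (leaderStep σ γ φ) 1 := by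
  rw [isFixedPt_leaderStep_iff (by rwa [mul_one]), sub_self, zero_mul]

theorem isFixedPt_leaderStep_iff_of_mem_Ioo (hD : 1 - γ - φ * T ≠ 0) (hT : T ∈ Set.Ioo 0 1) :
    IsFixedPt (leaderStep σ γ φ) T ↔ φ = σ * (1 - γ) / T := by
  rw [isFixedPt_leaderStep_iff hD, mul_eq_zero, or_iff_right (sub_ne_zero.2 hT.2.ne'),
    sub_eq_zero, eq_div_iff hT.1.ne', eq_comm]

end

theorem leader_fee_equilibrium_general (σ γ φ : ℝ)
    (hφ : φ ∈ Set.Ioo (0:ℝ) (1 - γ)) :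
    (∀ T ∈ Set.Ioo (0:ℝ) 1,
      (σ + (1 - σ) * ((1 - γ - φ) * T / (1 - γ - φ * T)) = T ↔ φ = σ * (1 - γ) / T)) ∧
    σ + (1 - σ) * ((1 - γ - φ) * 1 / (1 - γ - φ * 1)) = 1 := by
  refine ⟨fun T hT => ?_, isFixedPt_leaderStep_one (sub_pos.2 hφ.2).ne'⟩
  exact isFixedPt_leaderStep_iff_of_mem_Ioo
    (one_sub_sub_mul_pos hφ.1.le hφ.2 hT.2.le).ne' hT

theorem leader_fee_equilibrium (σ γ φ : ℝ)
    (hσ : σ ∈ Set.Ioo (0:ℝ) 1) (hγ : γ ∈ Set.Ioo (0:ℝ) 1)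
    (hφ : φ ∈ Set.Ioo (0:ℝ) (1 - γ)) :
    (∀ T ∈ Set.Ioo (0:ℝ) 1,
      (σ + (1 - σ) * ((1 - γ - φ) * T / (1 - γ - φ * T)) = T ↔ φ = σ * (1 - γ) / T)) ∧
    σ + (1 - σ) * ((1 - γ - φ) * 1 / (1 - γ - φ * 1)) = 1 :=
  leader_fee_equilibrium_general σ γ φ hφ
end

section
/- Let f(T) = σ + (1-σ)·(1-γ-φ)T/(1-γ-φT) for T ∈ (0,1], with σ ∈ (0,1), γ ∈ (0,1), 0 < φ < 1-γ. If φ < σ(1-γ)/T₀ and T₀ ∈ (1/2, 1), then the sequence T_{i+1} = f(T_i) is nondecreasing and converges to min(1, σ(1-γ)/φ). -/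
/-!
The map `f = allocStep σ γ φ` satisfies
`f t - t = (1 - t) (σ (1 - γ) - φ t) / (1 - γ - φ t)`,
so its fixed points are `1` and `σ (1 - γ) / φ`, and `t ≤ f t` for every `t` below the smaller
one, `L`. Since `f` is increasing on `t ≤ 1`, the iterates started below `L` increase and stay
below `L`; their limit is a fixed point `≤ L`, hence equals `L`.
-/

open Filter Topology Set

section MonotoneIteration

variable {α : Type*} {f : α → α} {T : ℕ → α} {L : α}

theorem le_of_iterate_of_le_fixedPt [Preorder α] (hrec : ∀ n, T (n + 1) = f (T n))
    (hf : MonotoneOn f (Iic L)) (hL : f L = L) (h0 : T 0 ≤ L) (n : ℕ) : T n ≤ L := by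
  induction n with
  | zero => exact h0
  | succ n ih => rw [hrec, ← hL]; exact hf ih le_rfl ih

theorem tendsto_fixedPt_of_monotone_iterate [ConditionallyCompleteLinearOrder α]
    [TopologicalSpace α] [OrderTopology α] (hrec : ∀ n, T (n + 1) = f (T n)) (hT : Monotone T)
    (hbound : ∀ n, T n ≤ L) (hcont : ContinuousOn f (Iic L))
    (hfix : ∀ t ≤ L, f t = t → t = L) : Tendsto T atTop (𝓝 L) := by
  have hbdd : BddAbove (range T) := ⟨L, forall_mem_range.2 hbound⟩
  have hsup_le : ⨆ n, T n ≤ L := ciSup_le hbound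
  have hlim : Tendsto T atTop (𝓝[Iic L] (⨆ n, T n)) :=
    tendsto_nhdsWithin_iff.2 ⟨tendsto_atTop_ciSup hT hbdd, Eventually.of_forall hbound⟩
  have hfT : Tendsto (fun n ↦ T (n + 1)) atTop (𝓝 (f (⨆ n, T n))) := by
    simp_rw [hrec]; exact (hcont _ hsup_le).tendsto.comp hlim
  have hsup_fixed : f (⨆ n, T n) = ⨆ n, T n :=
    tendsto_nhds_unique hfT ((tendsto_atTop_ciSup hT hbdd).comp (tendsto_add_atTop_nat 1))
  rw [← hfix _ hsup_le hsup_fixed]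
  exact tendsto_atTop_ciSup hT hbdd

end MonotoneIteration

/-- The traders' rule `T ↦ σ + (1 - σ) L` composed with the fee-adjusted LP rule
`L = (1 - γ - φ) T / (1 - γ - φ T)`. -/
noncomputable def allocStep (σ γ φ t : ℝ) : ℝ :=
  σ + (1 - σ) * ((1 - γ - φ) * t / (1 - γ - φ * t))

noncomputable def allocLimit (σ γ φ : ℝ) : ℝ := min 1 (σ * (1 - γ) / φ)

theorem allocLimit_le_one (σ γ φ : ℝ) : allocLimit σ γ φ ≤ 1 := min_le_left _ _

section AllocStep

variable {σ γ φ s t : ℝ}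

theorem allocStep_denom_pos (hφ0 : 0 ≤ φ) (hφ1 : φ < 1 - γ) (ht : t ≤ 1) :
    0 < 1 - γ - φ * t := by
  nlinarith

theorem allocStep_sub_self (ht : 1 - γ - φ * t ≠ 0) :
    allocStep σ γ φ t - t = (1 - t) * (σ * (1 - γ) - φ * t) / (1 - γ - φ * t) := by
  unfold allocStep
  field_simp
  ring

theorem allocStep_sub_allocStep (hs : 1 - γ - φ * s ≠ 0) (ht : 1 - γ - φ * t ≠ 0) :
    allocStep σ γ φ s - allocStep σ γ φ t =
      (1 - σ) * (1 - γ - φ) * (1 - γ) * (s - t) / ((1 - γ - φ * s) * (1 - γ - φ * t)) := by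
  unfold allocStep
  field_simp
  ring

theorem allocStep_monotoneOn (hσ : σ ≤ 1) (hφ0 : 0 ≤ φ) (hφ1 : φ < 1 - γ) :
    MonotoneOn (allocStep σ γ φ) (Iic 1) := by
  intro t ht s hs hts
  have hDs := allocStep_denom_pos hφ0 hφ1 hs
  have hDt := allocStep_denom_pos hφ0 hφ1 ht
  have hdiff := allocStep_sub_allocStep (σ := σ) hDs.ne' hDt.ne'
  have : 0 ≤ allocStep σ γ φ s - allocStep σ γ φ t := by
    rw [hdiff]
    apply div_nonneg _ (mul_pos hDs hDt).le
    apply mul_nonneg (mul_nonneg (mul_nonneg _ _) _) _ <;> linarith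
  linarith

theorem allocStep_continuousOn (hφ0 : 0 ≤ φ) (hφ1 : φ < 1 - γ) :
    ContinuousOn (allocStep σ γ φ) (Iic 1) := by
  unfold allocStep
  exact continuousOn_const.add (continuousOn_const.mul (ContinuousOn.div (by fun_prop)
    (by fun_prop) fun t ht ↦ (allocStep_denom_pos hφ0 hφ1 ht).ne'))

theorem mul_le_of_le_allocLimit (hφ0 : 0 < φ) (ht : t ≤ allocLimit σ γ φ) :
    φ * t ≤ σ * (1 - γ) := by
  rw [mul_comm, ← le_div_iff₀ hφ0]
  exact ht.trans (min_le_right _ _)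

theorem allocStep_allocLimit (hφ0 : 0 < φ) (hφ1 : φ < 1 - γ) :
    allocStep σ γ φ (allocLimit σ γ φ) = allocLimit σ γ φ := by
  have hD := allocStep_denom_pos hφ0.le hφ1 (allocLimit_le_one σ γ φ)
  have hroot : (1 - allocLimit σ γ φ) * (σ * (1 - γ) - φ * allocLimit σ γ φ) = 0 := by
    rcases min_choice 1 (σ * (1 - γ) / φ) with h | h <;> rw [allocLimit, h]
    · ring
    · rw [mul_div_cancel₀ _ hφ0.ne']; ring
  have := allocStep_sub_self (σ := σ) hD.ne'
  rw [hroot, zero_div] at this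
  linarith

theorem le_allocStep (hφ0 : 0 < φ) (hφ1 : φ < 1 - γ) (ht : t ≤ allocLimit σ γ φ) :
    t ≤ allocStep σ γ φ t := by
  have ht1 := ht.trans (allocLimit_le_one ..)
  have hD := allocStep_denom_pos hφ0.le hφ1 ht1
  have hφt := mul_le_of_le_allocLimit hφ0 ht
  have : 0 ≤ allocStep σ γ φ t - t := by
    rw [allocStep_sub_self hD.ne']
    exact div_nonneg (mul_nonneg (by linarith) (by linarith)) hD.le
  linarith

theorem eq_allocLimit_of_allocStep_eq (hφ0 : 0 < φ) (hφ1 : φ < 1 - γ)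
    (ht : t ≤ allocLimit σ γ φ) (hfix : allocStep σ γ φ t = t) : t = allocLimit σ γ φ := by
  have hD := allocStep_denom_pos hφ0.le hφ1 (ht.trans (allocLimit_le_one ..))
  have hroot := allocStep_sub_self (σ := σ) hD.ne'
  rw [hfix, sub_self, eq_comm, div_eq_zero_iff, mul_eq_zero, sub_eq_zero, sub_eq_zero] at hroot
  refine le_antisymm ht ?_
  rcases hroot with (h | h) | h
  · exact h ▸ allocLimit_le_one ..
  · exact min_le_of_right_le ((div_le_iff₀ hφ0).2 (by linarith))
  · exact absurd h hD.ne'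

end AllocStep

theorem low_fee_convergence_general (σ γ φ : ℝ) (T : ℕ → ℝ)
    (hσ : σ ∈ Set.Ioo (0:ℝ) 1)
    (hφ0 : 0 < φ) (hφ1 : φ < 1 - γ)
    (hφlow : φ < σ * (1 - γ) / T 0)
    (hT0 : T 0 ∈ Set.Ioo (1/2 : ℝ) 1)
    (hrec : ∀ i : ℕ,
      T (i + 1) = σ + (1 - σ) * ((1 - γ - φ) * T i / (1 - γ - φ * T i))) :
    Monotone T ∧
    Filter.Tendsto T Filter.atTop (nhds (min 1 (σ * (1 - γ) / φ))) := by
  have hstep : ∀ n, T (n + 1) = allocStep σ γ φ (T n) := hrec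
  have hT0L : T 0 ≤ allocLimit σ γ φ := by
    have hT0pos : 0 < T 0 := by linarith [hT0.1]
    refine le_min hT0.2.le ?_
    rw [le_div_iff₀ hφ0, mul_comm]
    exact ((lt_div_iff₀ hT0pos).1 hφlow).le
  have hsub : Iic (allocLimit σ γ φ) ⊆ Iic 1 := Iic_subset_Iic.2 (allocLimit_le_one ..)
  have hbound := le_of_iterate_of_le_fixedPt hstep
    ((allocStep_monotoneOn hσ.2.le hφ0.le hφ1).mono hsub) (allocStep_allocLimit hφ0 hφ1) hT0L
  have hmono : Monotone T :=
    monotone_nat_of_le_succ fun n ↦ hstep n ▸ le_allocStep hφ0 hφ1 (hbound n)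
  exact ⟨hmono, tendsto_fixedPt_of_monotone_iterate hstep hmono hbound
    ((allocStep_continuousOn hφ0.le hφ1).mono hsub)
    fun t ht hfix ↦ eq_allocLimit_of_allocStep_eq hφ0 hφ1 ht hfix⟩

theorem low_fee_convergence (σ γ φ : ℝ) (T : ℕ → ℝ)
    (hσ : σ ∈ Set.Ioo (0:ℝ) 1) (hγ : γ ∈ Set.Ioo (0:ℝ) 1)
    (hφ0 : 0 < φ) (hφ1 : φ < 1 - γ)
    (hφlow : φ < σ * (1 - γ) / T 0)
    (hT0 : T 0 ∈ Set.Ioo (1/2 : ℝ) 1)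
    (hrec : ∀ i : ℕ,
      T (i + 1) = σ + (1 - σ) * ((1 - γ - φ) * T i / (1 - γ - φ * T i))) :
    Monotone T ∧
    Filter.Tendsto T Filter.atTop (nhds (min 1 (σ * (1 - γ) / φ))) :=
  low_fee_convergence_general σ γ φ T hσ hφ0 hφ1 hφlow hT0 hrec
end

section
/- Let f(T) = σ + (1-σ)·(1-γ-φ)T/(1-γ-φT) with σ ∈ (0,1), γ ∈ (0,1), 0 < φ < 1-γ. If σ(1-γ)/T₀ < φ < 2σ(1-γ) and T₀ ∈ (1/2, 1), then the sequence T_{i+1} = f(T_i) is nonincreasing and converges to σ(1-γ)/φ, which lies in (1/2, T₀). -/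
theorem mid_fee_convergence (σ γ φ : ℝ) (T : ℕ → ℝ)
    (hσ : σ ∈ Set.Ioo (0:ℝ) 1) (hγ : γ ∈ Set.Ioo (0:ℝ) 1)
    (hφ0 : 0 < φ) (hφ1 : φ < 1 - γ)
    (hφlo : σ * (1 - γ) / T 0 < φ) (hφhi : φ < 2 * σ * (1 - γ))
    (hT0 : T 0 ∈ Set.Ioo (1/2 : ℝ) 1)
    (hrec : ∀ i : ℕ,
      T (i + 1) = σ + (1 - σ) * ((1 - γ - φ) * T i / (1 - γ - φ * T i))) :
    Antitone T ∧
    Filter.Tendsto T Filter.atTop (nhds (σ * (1 - γ) / φ)) ∧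
    σ * (1 - γ) / φ ∈ Set.Ioo (1/2 : ℝ) (T 0) := by
  obtain ⟨hσ0, hσ1⟩ := hσ
  obtain ⟨hγ0, hγ1⟩ := hγ
  obtain ⟨hT0l, hT0u⟩ := hT0
  set L : ℝ := σ * (1 - γ) / φ with hL
  have hφne : φ ≠ 0 := ne_of_gt hφ0
  have hLhalf : (1/2 : ℝ) < L := by
    rw [hL, lt_div_iff₀ hφ0]; nlinarith
  have hLT0 : L < T 0 := by
    have hT0pos : (0:ℝ) < T 0 := by linarith
    have h1 : σ * (1 - γ) < φ * T 0 := (div_lt_iff₀ hT0pos).mp hφlo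
    rw [hL, div_lt_iff₀ hφ0]
    nlinarith
  have hd0 : 0 < 1 - γ - φ * T 0 := by nlinarith
  set r : ℝ := (1 - γ - φ) / (1 - γ - φ * T 0) with hr
  have hr0 : 0 ≤ r := div_nonneg (by linarith) hd0.le
  have hr1 : r < 1 := by
    rw [hr, div_lt_one hd0]; nlinarith
  have hmono : ∀ n, L ≤ T n → T n ≤ T 0 →
      T (n+1) ≤ T n ∧ L ≤ T (n+1) ∧ T (n+1) - L ≤ r * (T n - L) := by
    intro n h1 h2
    have hdt : 0 < 1 - γ - φ * T n := by nlinarith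
    have hkey : T (n+1) - L = (1 - γ - φ) * (T n - L) / (1 - γ - φ * T n) := by
      rw [hrec n, hL]
      field_simp
      ring
    have hnum : 0 ≤ (1 - γ - φ) * (T n - L) :=
      mul_nonneg (by linarith) (by linarith)
    refine ⟨?_, ?_, ?_⟩
    · have h3 : (1 - γ - φ) * (T n - L) / (1 - γ - φ * T n) ≤ T n - L := by
        rw [div_le_iff₀ hdt]
        nlinarith [mul_nonneg (sub_nonneg.mpr h1)
          (mul_nonneg hφ0.le (sub_nonneg.mpr (show T n ≤ 1 by linarith)))]
      linarith [hkey, h3]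
    · have h3 : 0 ≤ (1 - γ - φ) * (T n - L) / (1 - γ - φ * T n) :=
        div_nonneg hnum hdt.le
      linarith [hkey, h3]
    · rw [hkey, hr, div_mul_eq_mul_div]
      have hdd : 1 - γ - φ * T 0 ≤ 1 - γ - φ * T n := by nlinarith
      exact div_le_div_of_nonneg_left hnum hd0 hdd
  have inv : ∀ n, L ≤ T n ∧ T n ≤ T 0 := by
    intro n
    induction n with
    | zero => exact ⟨hLT0.le, le_refl _⟩
    | succ k ih =>
      obtain ⟨h1, h2⟩ := ih
      obtain ⟨ha, hb, _⟩ := hmono k h1 h2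
      exact ⟨hb, le_trans ha h2⟩
  have hanti : Antitone T :=
    antitone_nat_of_succ_le (fun n => (hmono n (inv n).1 (inv n).2).1)
  have decay : ∀ n, T n - L ≤ r ^ n * (T 0 - L) := by
    intro n
    induction n with
    | zero => simp
    | succ k ih =>
      obtain ⟨_, _, hc⟩ := hmono k (inv k).1 (inv k).2
      calc T (k+1) - L ≤ r * (T k - L) := hc
        _ ≤ r * (r ^ k * (T 0 - L)) := mul_le_mul_of_nonneg_left ih hr0
        _ = r ^ (k+1) * (T 0 - L) := by ring
  have htend : Filter.Tendsto T Filter.atTop (nhds L) := by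
    have hup : Filter.Tendsto (fun n => L + r ^ n * (T 0 - L)) Filter.atTop
        (nhds (L + 0 * (T 0 - L))) := by
      exact Filter.Tendsto.const_add _
        (((tendsto_pow_atTop_nhds_zero_of_lt_one hr0 hr1)).mul_const _)
    rw [show L + 0 * (T 0 - L) = L by ring] at hup
    exact tendsto_of_tendsto_of_tendsto_of_le_of_le tendsto_const_nhds hup
      (fun n => (inv n).1) (fun n => by linarith [decay n])
  exact ⟨hanti, htend, hLhalf, hLT0⟩
end

section
/- Let η ∈ (0,1), φ_t > 0, V > 0, and let (V_i)_{i≥0} be a nonnegative sequence with V_i ≤ V for all i and V_i → 0. Then there exists η* ∈ (0,1) such that for all η ≥ η*, Σ_{i=0}^∞ φ_t V η^i > Σ_{i=0}^∞ (1-γ) V_i η^i, where 1-γ < 1 bounds any feasible fee. -/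
set_option maxHeartbeats 1000000


theorem patient_governance_prefers_threshold (φt V γ : ℝ) (Vseq : ℕ → ℝ)
    (hφ : 0 < φt) (hV : 0 < V) (hγ0 : 0 < γ) (hγ1 : γ < 1)
    (hVnn : ∀ i, 0 ≤ Vseq i) (hVle : ∀ i, Vseq i ≤ V)
    (hVlim : Filter.Tendsto Vseq Filter.atTop (nhds 0)) :
    ∃ ηstar ∈ Set.Ioo (0:ℝ) 1, ∀ η : ℝ, ηstar ≤ η → η < 1 →
      ∑' i : ℕ, (1 - γ) * Vseq i * η ^ i < ∑' i : ℕ, φt * V * η ^ i := by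
  have h1γ : 0 < 1 - γ := by linarith
  set δ := φt * V with hδdef
  have hδ : 0 < δ := mul_pos hφ hV
  set ε := δ / (2 * (1 - γ)) with hεdef
  have hε : 0 < ε := div_pos hδ (by linarith)
  obtain ⟨N, hN⟩ := (Metric.tendsto_atTop.mp hVlim ε hε)
  have hNsmall : ∀ i ≥ N, Vseq i ≤ ε := by
    intro i hi
    have := hN i hi
    rw [Real.dist_eq, sub_zero, abs_of_nonneg (hVnn i)] at this
    exact this.le
  set C := (N : ℝ) * ((1 - γ) * V) with hCdef
  have hC0 : 0 ≤ C := by positivity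
  refine ⟨max (1/2) (1 - δ / (2 * (C + 1))), ⟨lt_of_lt_of_le (by norm_num) (le_max_left _ _),
    max_lt (by norm_num) (by
      have : 0 < δ / (2 * (C + 1)) := by positivity
      linarith)⟩, ?_⟩
  intro η hηs hη1
  have hη0 : 0 ≤ η := le_trans (by norm_num) (le_trans (le_max_left _ _) hηs)
  have h1η : 0 < 1 - η := by linarith
  have hgs : Summable (fun i : ℕ => η ^ i) := summable_geometric_of_lt_one hη0 hη1
  have hfbound : ∀ i, (1 - γ) * Vseq i * η ^ i ≤ (1 - γ) * V * η ^ i := by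
    intro i
    exact mul_le_mul_of_nonneg_right
      (mul_le_mul_of_nonneg_left (hVle i) h1γ.le) (pow_nonneg hη0 i)
  have hfnn : ∀ i, 0 ≤ (1 - γ) * Vseq i * η ^ i := by
    intro i; exact mul_nonneg (mul_nonneg h1γ.le (hVnn i)) (pow_nonneg hη0 i)
  have hsumf : Summable (fun i : ℕ => (1 - γ) * Vseq i * η ^ i) :=
    Summable.of_nonneg_of_le hfnn hfbound (hgs.mul_left ((1 - γ) * V))
  -- RHS value
  have hRHS : ∑' i : ℕ, φt * V * η ^ i = δ * (1 - η)⁻¹ := by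
    rw [tsum_mul_left, tsum_geometric_of_lt_one hη0 hη1]
  -- split LHS
  have hsplit := Summable.sum_add_tsum_nat_add (f := fun i : ℕ => (1 - γ) * Vseq i * η ^ i) N hsumf
  -- finite part bound
  have hfin : ∑ i ∈ Finset.range N, (1 - γ) * Vseq i * η ^ i ≤ C := by
    have h := Finset.sum_le_card_nsmul (Finset.range N)
      (fun i => (1 - γ) * Vseq i * η ^ i) ((1 - γ) * V) ?_
    · simpa [Finset.card_range, nsmul_eq_mul, hCdef] using h
    · intro i _
      calc (1 - γ) * Vseq i * η ^ i ≤ (1 - γ) * V * η ^ i := hfbound i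
        _ ≤ (1 - γ) * V * 1 := by
            exact mul_le_mul_of_nonneg_left (pow_le_one₀ hη0 hη1.le)
              (by positivity)
        _ = (1 - γ) * V := mul_one _
  -- tail bound
  have htailsum : Summable (fun i : ℕ => (1 - γ) * Vseq (i + N) * η ^ (i + N)) :=
    (summable_nat_add_iff N).mpr hsumf
  have htail : ∑' i : ℕ, (1 - γ) * Vseq (i + N) * η ^ (i + N) ≤ (δ / 2) * (1 - η)⁻¹ := by
    have hle : ∀ i : ℕ, (1 - γ) * Vseq (i + N) * η ^ (i + N) ≤ ((1 - γ) * ε) * η ^ i := by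
      intro i
      calc (1 - γ) * Vseq (i + N) * η ^ (i + N)
          ≤ (1 - γ) * ε * η ^ (i + N) :=
            mul_le_mul_of_nonneg_right
              (mul_le_mul_of_nonneg_left (hNsmall (i + N) (Nat.le_add_left _ _)) h1γ.le)
              (pow_nonneg hη0 _)
        _ ≤ (1 - γ) * ε * η ^ i :=
            mul_le_mul_of_nonneg_left
              (pow_le_pow_of_le_one hη0 hη1.le (Nat.le_add_right _ _)) (by positivity)
    have h2 : ∑' i : ℕ, (1 - γ) * Vseq (i + N) * η ^ (i + N)
        ≤ ∑' i : ℕ, ((1 - γ) * ε) * η ^ i :=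
      Summable.tsum_le_tsum hle htailsum (hgs.mul_left _)
    have h3 : ∑' i : ℕ, ((1 - γ) * ε) * η ^ i = ((1 - γ) * ε) * (1 - η)⁻¹ := by
      rw [tsum_mul_left, tsum_geometric_of_lt_one hη0 hη1]
    have h4 : (1 - γ) * ε = δ / 2 := by
      rw [hεdef, mul_div_assoc', mul_comm (1 - γ) δ]
      rw [mul_comm 2 (1 - γ), mul_comm δ (1 - γ), mul_div_mul_left δ 2 (ne_of_gt h1γ)]
    rw [h3, h4] at h2
    exact h2
  -- C < (δ/2) * (1-η)⁻¹
  have hCsmall : C < (δ / 2) * (1 - η)⁻¹ := by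
    have hηge : 1 - δ / (2 * (C + 1)) ≤ η := le_trans (le_max_right _ _) hηs
    have h1 : 1 - η ≤ δ / (2 * (C + 1)) := by linarith
    have h2 : C * (1 - η) < δ / 2 := by
      have := mul_le_mul_of_nonneg_left h1 hC0
      have h3 : C * (δ / (2 * (C + 1))) < δ / 2 := by
        rw [mul_div_assoc', div_lt_div_iff₀ (by positivity : (0:ℝ) < 2 * (C + 1)) (by norm_num : (0:ℝ) < 2)]
        nlinarith
      linarith
    rw [← div_eq_mul_inv, lt_div_iff₀ h1η]
    linarith [h2]
  calc ∑' i : ℕ, (1 - γ) * Vseq i * η ^ i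
      = ∑ i ∈ Finset.range N, (1 - γ) * Vseq i * η ^ i
        + ∑' i : ℕ, (1 - γ) * Vseq (i + N) * η ^ (i + N) := hsplit.symm
    _ ≤ C + (δ / 2) * (1 - η)⁻¹ := add_le_add hfin htail
    _ < (δ / 2) * (1 - η)⁻¹ + (δ / 2) * (1 - η)⁻¹ := by linarith
    _ = δ * (1 - η)⁻¹ := by ring
    _ = ∑' i : ℕ, φt * V * η ^ i := hRHS.symm
end
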